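/- arXiv:1209.0366 — 5 statements merged into one kernel-verified Lean document; each statement's English description precedes it below -/
import Mathlib

section
/- Let G be a finite simple graph with list assignment L, and let T be a subgraph of G such that G is T-critical with respect to L. Let S be a subgraph of G and let G' be an S-component of G. Then G' is S-critical with respect to L (restricted to G'). -/
/-- A proper `L`-coloring of the subgraph `H` of `G`. -/
def SubColoring {V α : Type*} {G : SimpleGraph V} (L : V → Finset α)
    (H : G.Subgraph) (φ : V → α) : Prop :=
  (∀ v ∈ H.verts, φ v ∈ L v) ∧ ∀ u w : V, H.Adj u w → φ u ≠ φ w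

/-- The coloring `φ` of `T` extends to an `L`-coloring of `K`. -/
def ExtendsToSub {V α : Type*} {G : SimpleGraph V} (L : V → Finset α)
    (T K : G.Subgraph) (φ : V → α) : Prop :=
  ∃ ψ : V → α, SubColoring L K ψ ∧ ∀ v ∈ T.verts, ψ v = φ v

/-- `K` is `T`-critical with respect to the list assignment `L`. -/
def IsCriticalSub {V α : Type*} {G : SimpleGraph V} (L : V → Finset α)
    (T K : G.Subgraph) : Prop :=
  T ≤ K ∧ T ≠ K ∧
    ∀ K' : G.Subgraph, T ≤ K' → K' < K →
      ∃ φ : V → α, SubColoring L T φ ∧ ExtendsToSub L T K' φ ∧ ¬ ExtendsToSub L T K φ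

/-! Given `S ≤ K' < G'`, replace `G'` by `K'` inside `G`. The resulting subgraph contains
`T` (as `T ∩ G' ⊆ S`) and is proper, so criticality of `G` yields a coloring `φ` of `T` that
extends to it, by some `ψ`, but not to `G`. The restriction of `ψ` to `S` extends to `K'`. If
it also extended to `G'`, by `θ`, then `θ` on `G' - S` glued with `ψ` elsewhere would be an
`L`-coloring of `G` extending `φ`, since every edge of `G` at a vertex of `G' - S` is an edge
of `G'`. -/

namespace SimpleGraph.Subgraph

variable {V : Type*} {G : SimpleGraph V}

def replace (G' K' : G.Subgraph) : G.Subgraph :=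
  ((⊤ : G.Subgraph).deleteVerts (G'.verts \ K'.verts)).deleteEdges (G'.edgeSet \ K'.edgeSet)

variable {T G' K K' : G.Subgraph}

theorem mem_replace_verts {v : V} :
    v ∈ (G'.replace K').verts ↔ (v ∈ G'.verts → v ∈ K'.verts) := by
  simp [replace]

theorem replace_adj {u w : V} :
    (G'.replace K').Adj u w ↔ G.Adj u w ∧ (u ∈ G'.verts → u ∈ K'.verts) ∧
      (w ∈ G'.verts → w ∈ K'.verts) ∧ (G'.Adj u w → K'.Adj u w) := by
  simp only [replace, deleteEdges_adj, deleteVerts_adj, top_adj, Set.mem_sdiff]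
  tauto

theorem le_replace (h : T ⊓ G' ≤ K') : T ≤ G'.replace K' := by
  refine ⟨fun v hv => mem_replace_verts.2 fun hv' => h.1 ⟨hv, hv'⟩, fun u w huw => ?_⟩
  exact replace_adj.2 ⟨T.adj_sub huw, fun hu => h.1 ⟨T.edge_vert huw, hu⟩,
    fun hw => h.1 ⟨T.edge_vert huw.symm, hw⟩, fun h' => h.2 ⟨huw, h'⟩⟩

theorem replace_mono (h : K ≤ K') : G'.replace K ≤ G'.replace K' := by
  refine ⟨fun v hv => ?_, fun u w huw => ?_⟩
  · exact mem_replace_verts.2 fun hv' => h.1 (mem_replace_verts.1 hv hv')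
  · obtain ⟨hG, hu, hw, hK⟩ := replace_adj.1 huw
    exact replace_adj.2
      ⟨hG, fun hu' => h.1 (hu hu'), fun hw' => h.1 (hw hw'), fun h' => h.2 (hK h')⟩

theorem replace_lt_top (h : ¬ G' ≤ K') : G'.replace K' < ⊤ := by
  refine lt_top_iff_ne_top.2 fun htop => h ⟨fun v hv => ?_, fun u w huw => ?_⟩
  · exact mem_replace_verts.1 (htop ▸ Set.mem_univ v) hv
  · exact (replace_adj.1 (htop ▸ top_adj.2 (G'.adj_sub huw))).2.2.2 huw

end SimpleGraph.Subgraph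

open SimpleGraph.Subgraph

section Coloring

variable {V α : Type*} {G : SimpleGraph V} {L : V → Finset α}

theorem SubColoring.anti {H K : G.Subgraph} {φ : V → α} (hφ : SubColoring L H φ)
    (hKH : K ≤ H) : SubColoring L K φ :=
  ⟨fun v hv => hφ.1 v (hKH.1 hv), fun u w huw => hφ.2 u w (hKH.2 huw)⟩

theorem extendsToSub_top_of_replace {S G' : G.Subgraph} {ψ : V → α}
    (hedges : ∀ u w : V, G.Adj u w → u ∈ G'.verts → u ∉ S.verts → G'.Adj u w)
    (hψ : SubColoring L (G'.replace S) ψ) (hψS : ExtendsToSub L S G' ψ) :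
    ExtendsToSub L (G'.replace S) ⊤ ψ := by
  classical
  obtain ⟨θ, hθ, hθψ⟩ := hψS
  set D := G'.verts \ S.verts
  have hS : ∀ v ∉ D, v ∈ G'.verts → v ∈ S.verts := fun v hvD hv =>
    by_contra fun hvS => hvD ⟨hv, hvS⟩
  refine ⟨D.piecewise θ ψ, ⟨fun v _ => ?_, fun u w huw => ?_⟩,
    fun v hv => Set.piecewise_eq_of_notMem _ _ _ fun hvD => hvD.2 (mem_replace_verts.1 hv hvD.1)⟩
  · by_cases hv : v ∈ D
    · rw [Set.piecewise_eq_of_mem _ _ _ hv]; exact hθ.1 v hv.1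
    · rw [Set.piecewise_eq_of_notMem _ _ _ hv]; exact hψ.1 v (mem_replace_verts.2 (hS v hv))
  -- every edge of `G` meeting `D` lies in `G'`, and where it leaves `D` it ends in `S`,
  -- on which `θ` and `ψ` agree
  have hD : ∀ u w, G.Adj u w → u ∈ D → D.piecewise θ ψ u ≠ D.piecewise θ ψ w := by
    intro u w huw hu
    have hG' : G'.Adj u w := hedges u w huw hu.1 hu.2
    rw [Set.piecewise_eq_of_mem _ _ _ hu]
    by_cases hw : w ∈ D
    · rw [Set.piecewise_eq_of_mem _ _ _ hw]
      exact hθ.2 u w hG'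
    · rw [Set.piecewise_eq_of_notMem _ _ _ hw, ← hθψ w (hS w hw (G'.edge_vert hG'.symm))]
      exact hθ.2 u w hG'
  have hG : G.Adj u w := top_adj.1 huw
  by_cases hu : u ∈ D
  · exact hD u w hG hu
  by_cases hw : w ∈ D
  · exact (hD w u hG.symm hw).symm
  rw [Set.piecewise_eq_of_notMem _ _ _ hu, Set.piecewise_eq_of_notMem _ _ _ hw]
  by_cases hG' : G'.Adj u w
  · rw [← hθψ u (hS u hu (G'.edge_vert hG')), ← hθψ w (hS w hw (G'.edge_vert hG'.symm))]
    exact hθ.2 u w hG'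
  · exact hψ.2 u w (replace_adj.2 ⟨hG, hS u hu, hS w hw, fun h => absurd h hG'⟩)

end Coloring

theorem isCriticalSub_of_component_general {V α : Type*} {G : SimpleGraph V}
    (L : V → Finset α) (T S G' : G.Subgraph)
    (hT : IsCriticalSub L T (⊤ : G.Subgraph))
    (hSG' : S < G')
    (hTS : T ⊓ G' ≤ S)
    (hedges : ∀ u w : V, G.Adj u w → u ∈ G'.verts → u ∉ S.verts → G'.Adj u w) :
    IsCriticalSub L S G' := by
  refine ⟨hSG'.le, hSG'.ne, fun K' hSK' hK'G' => ?_⟩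
  obtain ⟨φ, -, ⟨ψ, hψ, hψφ⟩, hφ⟩ :=
    hT.2.2 (G'.replace K') (le_replace (hTS.trans hSK')) (replace_lt_top hK'G'.not_ge)
  have hK' : SubColoring L K' ψ := hψ.anti (le_replace inf_le_left)
  refine ⟨ψ, hK'.anti hSK', ⟨ψ, hK', fun _ _ => rfl⟩, fun hψG' => hφ ?_⟩
  obtain ⟨χ, hχ, hχψ⟩ :=
    extendsToSub_top_of_replace hedges (hψ.anti (replace_mono hSK')) hψG'
  exact ⟨χ, hχ, fun v hv => (hχψ v ((le_replace hTS).1 hv)).trans (hψφ v hv)⟩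

/-- If `G` is `T`-critical and `G'` is an `S`-component of `G`, then `G'` is
`S`-critical. -/
theorem isCriticalSub_of_component {V α : Type*} [Fintype V] {G : SimpleGraph V}
    (L : V → Finset α) (T S G' : G.Subgraph)
    (hT : IsCriticalSub L T (⊤ : G.Subgraph))
    (hSG' : S < G')
    (hTS : T ⊓ G' ≤ S)
    (hedges : ∀ u w : V, G.Adj u w → u ∈ G'.verts → u ∉ S.verts → G'.Adj u w) :
    IsCriticalSub L S G' :=
  isCriticalSub_of_component_general L T S G' hT hSG' hTS hedges
end

section
/- Let G be a finite simple graph with list assignment L, and let T be a subgraph of G such that G is T-critical with respect to L. Then every vertex v of G with v ∉ V(T) satisfies deg_G(v) ≥ |L(v)|. -/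
/-! Deleting a vertex `v` outside `T` gives a proper subgraph of `G` that still contains `T`.
If `v` had fewer neighbours than colours in `L v`, every `L`-coloring of `G - v` could be
completed at `v` by a colour unused on its neighbourhood, so every precoloring of `T` extending
to `G - v` would extend to `G`, contradicting criticality. -/

namespace SimpleGraph.Subgraph

variable {V α : Type*} {G : SimpleGraph V}

theorem le_deleteVerts_of_disjoint {T H : G.Subgraph} {s : Set V} (hTH : T ≤ H)
    (hs : Disjoint T.verts s) : T ≤ H.deleteVerts s := by
  refine ⟨fun u hu => ⟨hTH.1 hu, hs.notMem_of_mem_left hu⟩, fun u w huw => ?_⟩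
  rw [deleteVerts_adj]
  exact ⟨hTH.1 (T.edge_vert huw), hs.notMem_of_mem_left (T.edge_vert huw),
    hTH.1 (T.edge_vert huw.symm), hs.notMem_of_mem_left (T.edge_vert huw.symm), hTH.2 huw⟩

theorem deleteVerts_singleton_lt {H : G.Subgraph} {v : V} (hv : v ∈ H.verts) :
    H.deleteVerts {v} < H :=
  deleteVerts_le.lt_of_ne fun h => (by rw [h]; exact hv : v ∈ (H.deleteVerts {v}).verts).2 rfl

end SimpleGraph.Subgraph

open SimpleGraph SimpleGraph.Subgraph

section Greedy

variable {V α : Type*} {G : SimpleGraph V} [DecidableEq V] (L : V → Finset α)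

theorem SubColoring.update_of_deleteVerts {H : G.Subgraph} {v : V} {ψ : V → α} {c : α}
    (hψ : SubColoring L (H.deleteVerts {v}) ψ) (hc : c ∈ L v)
    (hfree : ∀ w, H.Adj v w → ψ w ≠ c) : SubColoring L H (Function.update ψ v c) := by
  refine ⟨fun w hw => ?_, fun u w huw => ?_⟩
  · rcases eq_or_ne w v with rfl | hwv
    · simpa using hc
    · simpa [hwv] using hψ.1 w ⟨hw, hwv⟩
  · have hne := G.ne_of_adj (H.adj_sub huw)
    rcases eq_or_ne u v with rfl | huv
    · simpa [hne.symm] using (hfree w huw).symm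
    rcases eq_or_ne w v with rfl | hwv
    · simpa [hne] using hfree u huw.symm
    simpa [huv, hwv] using hψ.2 u w (deleteVerts_adj.2
      ⟨H.edge_vert huw, huv, H.edge_vert huw.symm, hwv, huw⟩)

theorem ExtendsToSub.of_deleteVerts_of_degree_lt {T H : G.Subgraph} {v : V}
    [Fintype (G.neighborSet v)] [DecidableEq α] {φ : V → α} (hv : v ∉ T.verts)
    (hdeg : G.degree v < (L v).card) (hext : ExtendsToSub L T (H.deleteVerts {v}) φ) :
    ExtendsToSub L T H φ := by
  obtain ⟨ψ, hψ, hψφ⟩ := hext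
  have hused : ((G.neighborFinset v).image ψ).card < (L v).card :=
    Finset.card_image_le.trans_lt ((G.card_neighborFinset_eq_degree v).symm ▸ hdeg)
  obtain ⟨c, hc, hcfree⟩ := Finset.exists_mem_notMem_of_card_lt_card hused
  refine ⟨Function.update ψ v c, hψ.update_of_deleteVerts L hc fun w hvw hwc => ?_,
    fun w hw => ?_⟩
  · exact hcfree (Finset.mem_image.2 ⟨w, (G.mem_neighborFinset v w).2 (H.adj_sub hvw), hwc⟩)
  · rw [Function.update_of_ne (ne_of_mem_of_not_mem hw hv)]
    exact hψφ w hw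

end Greedy

/-- In a `T`-critical graph, every vertex outside `T` has degree at least the
size of its list. -/
theorem degree_ge_of_isCriticalSub {V α : Type*} [Fintype V] {G : SimpleGraph V}
    [DecidableRel G.Adj]
    (L : V → Finset α) (T : G.Subgraph)
    (hT : IsCriticalSub L T (⊤ : G.Subgraph))
    (v : V) (hv : v ∉ T.verts) :
    (L v).card ≤ G.degree v := by
  classical
  by_contra! hdeg
  obtain ⟨hTtop, -, hcrit⟩ := hT
  obtain ⟨φ, -, hext, hnot⟩ := hcrit ((⊤ : G.Subgraph).deleteVerts {v})
    (le_deleteVerts_of_disjoint hTtop (Set.disjoint_singleton_right.2 hv))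
    (deleteVerts_singleton_lt trivial)
  exact hnot (hext.of_deleteVerts_of_degree_lt L hv hdeg)
end

section
/- Let G be a finite simple graph with list assignment L, and let T be a subgraph of G such that G is T-critical with respect to L and |L(t)| = 1 for every vertex t of T; let ψ denote the coloring of T determined by these singleton lists. Then for every vertex v of G with v ∉ V(T): (i) if v is adjacent in G to a vertex r of T, then ψ(r) ∈ L(v); (ii) if v is adjacentในG to two distinct vertices r and r' of T, then ψ(r) ≠ ψ(r'). Consequently, if v has exactly k neighbors in V(T), then the set S(v) = L(v) \ {ψ(r) : r ∈ V(T), r adjacent to v} satisfies |S(v)| = |L(v)| − k. -/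
namespace SimpleGraph.Subgraph

variable {V : Type*} {G : SimpleGraph V} {T K : G.Subgraph} {v r r' : V}

lemma le_deleteEdges_of_notMem_verts (hTK : T ≤ K) (hv : v ∉ T.verts) :
    T ≤ K.deleteEdges {s(v, r)} := by
  refine ⟨fun x hx => hTK.1 hx, fun u w huw => (deleteEdges_adj _ _ _).2 ⟨hTK.2 huw, ?_⟩⟩
  rw [Set.mem_singleton_iff, Sym2.eq_iff]
  rintro (⟨rfl, -⟩ | ⟨-, rfl⟩)
  exacts [hv huw.fst_mem, hv huw.snd_mem]

lemma deleteEdges_lt_of_adj (h : K.Adj v r) : K.deleteEdges {s(v, r)} < K :=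
  lt_of_le_of_ne (deleteEdges_le _) fun heq => by
    rw [← heq] at h
    exact ((deleteEdges_adj _ _ _).1 h).2 rfl

lemma deleteEdges_adj_of_ne (h : K.Adj v r') (hr : r' ≠ r) (hv : v ≠ r) :
    (K.deleteEdges {s(v, r)}).Adj v r' := by
  refine (deleteEdges_adj _ _ _).2 ⟨h, ?_⟩
  rw [Set.mem_singleton_iff, Sym2.eq_iff]
  rintro (⟨-, rfl⟩ | ⟨rfl, -⟩)
  exacts [hr rfl, hv rfl]

end SimpleGraph.Subgraph

namespace SubColoring

open SimpleGraph.Subgraph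

variable {V α : Type*} {G : SimpleGraph V} {L : V → Finset α} {T K : G.Subgraph}
  {θ ψ : V → α} {u w : V}

lemma of_deleteEdges (hθ : SubColoring L (K.deleteEdges {s(u, w)}) θ) (hne : θ u ≠ θ w) :
    SubColoring L K θ := by
  refine ⟨fun x hx => hθ.1 x (by rwa [deleteEdges_verts]), fun x y hxy => ?_⟩
  by_cases he : s(x, y) = s(u, w)
  · rcases Sym2.eq_iff.1 he with ⟨rfl, rfl⟩ | ⟨rfl, rfl⟩
    exacts [hne, hne.symm]
  · exact hθ.2 x y ((deleteEdges_adj _ _ _).2 ⟨hxy, he⟩)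

lemma eq_of_singleton_lists (hθ : SubColoring L T θ)
    (hψ : ∀ t ∈ T.verts, L t = {ψ t}) : ∀ t ∈ T.verts, θ t = ψ t := fun t ht =>
  Finset.mem_singleton.1 (hψ t ht ▸ hθ.1 t ht)

end SubColoring

namespace IsCriticalSub

open SimpleGraph.Subgraph

variable {V α : Type*} {G : SimpleGraph V} {L : V → Finset α} {T K : G.Subgraph}
  {ψ : V → α} {v r : V}

lemma exists_coloring_deleteEdges (hK : IsCriticalSub L T K) (hψ : ∀ t ∈ T.verts, L t = {ψ t})
    (hv : v ∉ T.verts) (hr : r ∈ T.verts) (hadj : K.Adj v r) :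
    ∃ θ : V → α, SubColoring L (K.deleteEdges {s(v, r)}) θ ∧
      (∀ t ∈ T.verts, θ t = ψ t) ∧ θ v = ψ r := by
  obtain ⟨φ, hφ, ⟨θ, hθ, hθφ⟩, hnot⟩ :=
    hK.2.2 _ (le_deleteEdges_of_notMem_verts hK.1 hv) (deleteEdges_lt_of_adj hadj)
  have hθψ : ∀ t ∈ T.verts, θ t = ψ t := fun t ht =>
    (hθφ t ht).trans (hφ.eq_of_singleton_lists hψ t ht)
  refine ⟨θ, hθ, hθψ, ?_⟩
  by_contra hne
  exact hnot ⟨θ, hθ.of_deleteEdges (hθψ r hr ▸ hne), hθφ⟩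

lemma mem_list_of_adj (hK : IsCriticalSub L T K) (hψ : ∀ t ∈ T.verts, L t = {ψ t})
    (hv : v ∉ T.verts) (hr : r ∈ T.verts) (hadj : K.Adj v r) : ψ r ∈ L v := by
  obtain ⟨θ, hθ, -, hθv⟩ := hK.exists_coloring_deleteEdges hψ hv hr hadj
  exact hθv ▸ hθ.1 v (by simpa only [deleteEdges_verts] using hadj.fst_mem)

lemma color_ne_of_adj (hK : IsCriticalSub L T K) (hψ : ∀ t ∈ T.verts, L t = {ψ t})
    (hv : v ∉ T.verts) {r r' : V} (hr : r ∈ T.verts) (hr' : r' ∈ T.verts) (hne : r ≠ r')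
    (hadj : K.Adj v r) (hadj' : K.Adj v r') : ψ r ≠ ψ r' := by
  obtain ⟨θ, hθ, hθψ, hθv⟩ := hK.exists_coloring_deleteEdges hψ hv hr hadj
  have hvr : v ≠ r := fun h => hv (h ▸ hr)
  simpa only [hθv, hθψ r' hr'] using hθ.2 v r' (deleteEdges_adj_of_ne hadj' hne.symm hvr)

end IsCriticalSub

theorem singleton_lists_of_isCriticalSub_general {V α : Type*} {G : SimpleGraph V}
    (L : V → Finset α) (T : G.Subgraph)
    (hT : IsCriticalSub L T (⊤ : G.Subgraph))
    (ψ : V → α) (hψ : ∀ t ∈ T.verts, L t = {ψ t})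
    (v : V) (hv : v ∉ T.verts) :
    (∀ r ∈ T.verts, G.Adj v r → ψ r ∈ L v) ∧
    (∀ r ∈ T.verts, ∀ r' ∈ T.verts, r ≠ r' → G.Adj v r → G.Adj v r' → ψ r ≠ ψ r') ∧
    ((↑(L v) : Set α) \ (ψ '' {r : V | r ∈ T.verts ∧ G.Adj v r})).ncard
      = (L v).card - {r : V | r ∈ T.verts ∧ G.Adj v r}.ncard := by
  have hmem : ∀ r ∈ T.verts, G.Adj v r → ψ r ∈ L v := fun r hr hadj =>
    hT.mem_list_of_adj hψ hv hr (SimpleGraph.Subgraph.top_adj.2 hadj)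
  have hne : ∀ r ∈ T.verts, ∀ r' ∈ T.verts, r ≠ r' → G.Adj v r → G.Adj v r' → ψ r ≠ ψ r' :=
    fun r hr r' hr' hrr' hadj hadj' => hT.color_ne_of_adj hψ hv hr hr' hrr'
      (SimpleGraph.Subgraph.top_adj.2 hadj) (SimpleGraph.Subgraph.top_adj.2 hadj')
  have hsub : ψ '' {r : V | r ∈ T.verts ∧ G.Adj v r} ⊆ (↑(L v) : Set α) := by
    rintro _ ⟨r, ⟨hr, hadj⟩, rfl⟩
    exact hmem r hr hadj
  have hinj : Set.InjOn ψ {r : V | r ∈ T.verts ∧ G.Adj v r} := fun r hr r' hr' heq =>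
    by_contra fun hrr' => hne r hr.1 r' hr'.1 hrr' hr.2 hr'.2 heq
  refine ⟨hmem, hne, ?_⟩
  rw [Set.ncard_sdiff' hsub, Set.ncard_coe_finset, hinj.ncard_image]

/-- If `G` is `T`-critical and all vertices of `T` have singleton lists
determining the coloring `ψ`, then for every `v ∉ V(T)`: the color of each
neighbor of `v` in `T` lies in `L(v)`, distinct neighbors of `v` in `T` get
distinct colors, and consequently
`|L(v) \ {ψ(r) : r ∈ V(T), r ~ v}| = |L(v)| - k` where `k` is the number of
neighbors of `v` in `V(T)`. -/
theorem singleton_lists_of_isCriticalSub {V α : Type*} [Fintype V] {G : SimpleGraph V}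
    (L : V → Finset α) (T : G.Subgraph)
    (hT : IsCriticalSub L T (⊤ : G.Subgraph))
    (ψ : V → α) (hψ : ∀ t ∈ T.verts, L t = {ψ t})
    (v : V) (hv : v ∉ T.verts) :
    (∀ r ∈ T.verts, G.Adj v r → ψ r ∈ L v) ∧
    (∀ r ∈ T.verts, ∀ r' ∈ T.verts, r ≠ r' → G.Adj v r → G.Adj v r' → ψ r ≠ ψ r') ∧
    ((↑(L v) : Set α) \ (ψ '' {r : V | r ∈ T.verts ∧ G.Adj v r})).ncard
      = (L v).card - {r : V | r ∈ T.verts ∧ G.Adj v r}.ncard :=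
  singleton_lists_of_isCriticalSub_general L T hT ψ hψ v hv
end

section
/- Let G be a fan procession with base xyz and let L be a dangerous list assignment for G. If φ₁ and φ₂ are precolorings of the base xyz that do not extend to an L-coloring of G, and φ₁(x) = φ₂(x) and φ₁(y) = φ₂(y), then φ₁ = φ₂. -/
/-- Vertices of a fan procession with `k` constituent pieces, where piece `i`
has order `ord i` and is a fat fan iff `fat i = true` (otherwise a fan):
the base `x, y, z`; the internal boundary vertices `bnd i` (representing `v_i`
for `1 ≤ i ≤ k-1`, with `v_0 = x` and `v_k = z`); the apex of each fat fan
piece; and the path vertices `pv i j` of piece `i`. -/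
inductive PVert (k : ℕ) (ord : Fin k → ℕ) (fat : Fin k → Bool) : Type where
  | x | y | z
  | bnd (i : Fin k) (h : (i : ℕ) ≠ 0)
  | apex (i : Fin k) (h : fat i = true)
  | pv (i : Fin k) (j : Fin (ord i))

/-- The boundary vertex `v_i` of the fan procession: `v_0 = x`, `v_k = z`
(and `v_i = z` for `i ≥ k`), and `v_i = bnd i` for `0 < i < k`. -/
def bvert {k : ℕ} {ord : Fin k → ℕ} {fat : Fin k → Bool} (i : ℕ) :
    PVert k ord fat :=
  if h0 : i = 0 then PVert.x
  else if hk : k ≤ i then PVert.z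
  else PVert.bnd ⟨i, by omega⟩ h0

/-- The hub of piece `i`: its apex if it is a fat fan, and `y` if it is a fan. -/
def hub {k : ℕ} {ord : Fin k → ℕ} {fat : Fin k → Bool} (i : Fin k) :
    PVert k ord fat :=
  if h : fat i = true then PVert.apex i h else PVert.y

/-- The fan procession with base `x y z` whose `i`-th constituent piece has
base `v_{i-1} y v_i`, has order `ord i`, and is a fat fan iff `fat i`. -/
def procGraph (k : ℕ) (ord : Fin k → ℕ) (fat : Fin k → Bool) :
    SimpleGraph (PVert k ord fat) :=
  SimpleGraph.fromEdgeSet (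
    -- the path x y z
    {s(PVert.x, PVert.y), s(PVert.y, PVert.z)} ∪
    -- y is adjacent to all internal boundary vertices v_1, …, v_{k-1}
    {e | ∃ (i : Fin k) (h : (i : ℕ) ≠ 0), e = s(PVert.y, PVert.bnd i h)} ∪
    -- the apex of a fat fan piece is adjacent to v_{i-1}, y and v_i
    {e | ∃ (i : Fin k) (h : fat i = true),
        e = s(PVert.apex i h, bvert (i : ℕ)) ∨
        e = s(PVert.apex i h, PVert.y) ∨
        e = s(PVert.apex i h, bvert ((i : ℕ) + 1))} ∪
    -- the hub of each piece is adjacent to all its path vertices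
    {e | ∃ (i : Fin k) (j : Fin (ord i)), e = s(hub i, PVert.pv i j)} ∪
    -- the first path vertex of piece i is adjacent to v_{i-1}
    {e | ∃ (i : Fin k) (j : Fin (ord i)), (j : ℕ) = 0 ∧
        e = s(bvert (i : ℕ), PVert.pv i j)} ∪
    -- consecutive path vertices are adjacent
    {e | ∃ (i : Fin k) (j j' : Fin (ord i)), (j : ℕ) + 1 = (j' : ℕ) ∧
        e = s(PVert.pv i j, PVert.pv i j')} ∪
    -- the last path vertex of piece i is adjacent to v_i
    {e | ∃ (i : Fin k) (j : Fin (ord i)), (j : ℕ) = ord i - 1 ∧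
        e = s(PVert.pv i j, bvert ((i : ℕ) + 1))} ∪
    -- a fan of order 0 is just the edge v_{i-1} v_i
    {e | ∃ i : Fin k, fat i = false ∧ ord i = 0 ∧
        e = s(bvert (i : ℕ), bvert ((i : ℕ) + 1))})

/-- A dangerous list assignment for the fan procession: every vertex other
than `x, y, z` and the apexes has a list of size exactly `3`, and every apex
has a list of size exactly `5`. -/
def DangerousProc {k : ℕ} {ord : Fin k → ℕ} {fat : Fin k → Bool} {α : Type*}
    (L : PVert k ord fat → Finset α) : Prop :=
  (∀ (i : Fin k) (h : (i : ℕ) ≠ 0), (L (PVert.bnd i h)).card = 3) ∧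
  (∀ (i : Fin k) (j : Fin (ord i)), (L (PVert.pv i j)).card = 3) ∧
  (∀ (i : Fin k) (h : fat i = true), (L (PVert.apex i h)).card = 5)

/-- `cx, cy, cz` is a precoloring of the base `x y z`, i.e. a proper coloring
of the subgraph induced by `{x, y, z}`. -/
def IsPrecolProc (k : ℕ) (ord : Fin k → ℕ) (fat : Fin k → Bool) {α : Type*}
    (cx cy cz : α) : Prop :=
  cx ≠ cy ∧ cy ≠ cz ∧
    ((procGraph k ord fat).Adj PVert.x PVert.z → cx ≠ cz)

/-- The precoloring `cx, cy, cz` of the base extends to an `L`-coloring of the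
fan procession. -/
def ExtendsProc {k : ℕ} {ord : Fin k → ℕ} {fat : Fin k → Bool} {α : Type*}
    (L : PVert k ord fat → Finset α) (cx cy cz : α) : Prop :=
  ∃ ψ : PVert k ord fat → α,
    (∀ u w : PVert k ord fat, (procGraph k ord fat).Adj u w → ψ u ≠ ψ w) ∧
    ψ PVert.x = cx ∧ ψ PVert.y = cy ∧ ψ PVert.z = cz ∧
    (∀ w : PVert k ord fat, w ≠ PVert.x → w ≠ PVert.y → w ≠ PVert.z → ψ w ∈ L w)

/-!
Once `x` and `y` are colored, at most one color of `z` is bad. In a fan with base colored `u h w`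
and lists of size 3, coloring the path greedily from `u` succeeds unless `w` is one particular
color. In a fat fan the apex has three usable colors `A`, each failing only for `w ∈ {A, bad A}`,
and three such pairs with distinct `A` share at most one color. Coloring `v_1, …, v_{k-1}` from
left to right, each avoiding the color of `y` and the bad color of the piece on its left, leaves
only the bad color of the last piece excluded for `z`.
-/

section Fan

variable {α : Type*}

/-- `p` properly colors the path `v_1 … v_n` of a fan of order `n` whose base `x y z` is
colored `u h w`. -/
structure IsFanColoring {n : ℕ} (u h w : α) (p : Fin n → α) : Prop where
  ne_hub : ∀ j, p j ≠ h
  ne_left : ∀ j : Fin n, (j : ℕ) = 0 → p j ≠ u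
  ne_right : ∀ j : Fin n, (j : ℕ) = n - 1 → p j ≠ w
  ne_succ : ∀ j j' : Fin n, (j : ℕ) + 1 = j' → p j ≠ p j'
  left_ne_right : n = 0 → u ≠ w

theorem IsFanColoring.cons {n : ℕ} {u h w a : α} {p : Fin n → α} (hau : a ≠ u) (hah : a ≠ h)
    (hp : IsFanColoring a h w p) : IsFanColoring u h w (Fin.cons a p : Fin (n + 1) → α) where
  ne_hub j := by
    cases j using Fin.cases with
    | zero => simpa
    | succ j => simpa using hp.ne_hub j
  ne_left j hj := by
    obtain rfl : j = 0 := Fin.ext hj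
    simpa
  ne_right j hj := by
    cases j using Fin.cases with
    | zero => simpa using hp.left_ne_right (by simpa using hj.symm)
    | succ j => simpa using hp.ne_right j (by simp at hj; omega)
  ne_succ j j' hjj' := by
    cases j' using Fin.cases with
    | zero => simp at hjj'
    | succ j' =>
      cases j using Fin.cases with
      | zero => simpa using (hp.ne_left j' (by simp at hjj'; omega)).symm
      | succ j => simpa using hp.ne_succ j j' (by simp at hjj'; omega)
  left_ne_right hn := absurd hn n.succ_ne_zero

variable [DecidableEq α]

theorem Finset.exists_mem_ne_ne {s : Finset α} (hs : 3 ≤ s.card) (a b : α) :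
    ∃ c ∈ s, c ≠ a ∧ c ≠ b := by
  obtain ⟨c, hcs, hc⟩ := Finset.exists_mem_notMem_of_card_lt_card
    ((Finset.card_le_two : ({a, b} : Finset α).card ≤ 2).trans_lt hs)
  exact ⟨c, hcs, by simpa [not_or] using hc⟩

theorem exists_fanColoring (u h : α) {n : ℕ} (Lp : Fin n → Finset α)
    (hLp : ∀ j, 3 ≤ (Lp j).card) :
    ∃ b, ∀ w, w ≠ h → w ≠ b → ∃ p, (∀ j, p j ∈ Lp j) ∧ IsFanColoring u h w p := by
  induction n generalizing u with
  | zero =>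
    refine ⟨u, fun w _ hwu => ⟨Fin.elim0, fun j => j.elim0, ?_⟩⟩
    exact ⟨fun j => j.elim0, fun j => j.elim0, fun j => j.elim0, fun j => j.elim0,
      fun _ => hwu.symm⟩
  | succ n ih =>
    obtain ⟨a, haL, hau, hah⟩ := Finset.exists_mem_ne_ne (hLp 0) u h
    obtain ⟨b, hb⟩ := ih a (Fin.tail Lp) (fun j => hLp j.succ)
    refine ⟨b, fun w hwh hwb => ?_⟩
    obtain ⟨p, hpL, hp⟩ := hb w hwh hwb
    refine ⟨Fin.cons a p, fun j => ?_, hp.cons hau hah⟩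
    cases j using Fin.cases with
    | zero => simpa
    | succ j => simpa [Fin.tail] using hpL j

theorem exists_forall_exists_mem_ne_ne {s : Finset α} (hs : 3 ≤ s.card) (f : α → α) :
    ∃ b, ∀ w, w ≠ b → ∃ c ∈ s, w ≠ c ∧ w ≠ f c := by
  by_cases hcommon : ∃ b, ∀ c ∈ s, b = c ∨ b = f c
  · obtain ⟨b, hb⟩ := hcommon
    refine ⟨b, fun w hwb => ?_⟩
    by_contra! hw
    have hsub : s ⊆ {w, b} := fun c hc => by
      have := hb c hc
      by_cases hwc : w = c
      · simp [hwc]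
      · grind [hw c hc hwc]
    have := (Finset.card_le_card hsub).trans Finset.card_le_two
    omega
  · push Not at hcommon
    obtain ⟨b, -⟩ := Finset.card_pos.mp (by omega : 0 < s.card)
    exact ⟨b, fun w _ => hcommon w⟩

theorem exists_fatFanColoring (u h : α) {La : Finset α} (hLa : 5 ≤ La.card) {n : ℕ}
    (Lp : Fin n → Finset α) (hLp : ∀ j, 3 ≤ (Lp j).card) :
    ∃ b, ∀ w, w ≠ b → ∃ A ∈ La, A ≠ u ∧ A ≠ h ∧ A ≠ w ∧
      ∃ p, (∀ j, p j ∈ Lp j) ∧ IsFanColoring u A w p := by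
  have hcand : 3 ≤ (La \ {u, h}).card := by
    have := Finset.le_card_sdiff {u, h} La
    have : ({u, h} : Finset α).card ≤ 2 := Finset.card_le_two
    omega
  choose bad hbad using fun A => exists_fanColoring u A Lp hLp
  obtain ⟨b, hb⟩ := exists_forall_exists_mem_ne_ne hcand bad
  refine ⟨b, fun w hwb => ?_⟩
  obtain ⟨A, hA, hwA, hwbad⟩ := hb w hwb
  simp only [Finset.mem_sdiff, Finset.mem_insert, Finset.mem_singleton, not_or] at hA
  exact ⟨A, hA.1, hA.2.1, hA.2.2, hwA.symm, hbad A w hwA hwbad⟩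

end Fan

theorem SimpleGraph.fromEdgeSet_adj_ne {V β : Type*} {s : Set (Sym2 V)} {ψ : V → β}
    (hs : ∀ e ∈ s, ¬ (e.map ψ).IsDiag) {u v : V} (huv : (SimpleGraph.fromEdgeSet s).Adj u v) :
    ψ u ≠ ψ v := by
  simpa using hs _ huv.1

section Procession

variable {k : ℕ} {ord : Fin k → ℕ} {fat : Fin k → Bool} {α : Type*}

theorem procGraph_adj_ne {ψ : PVert k ord fat → α} (hxy : ψ .x ≠ ψ .y) (hyz : ψ .y ≠ ψ .z)
    (hbnd : ∀ i h, ψ (.bnd i h) ≠ ψ .y)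
    (hapex : ∀ (i : Fin k) h, ψ (.apex i h) ≠ ψ (bvert i) ∧ ψ (.apex i h) ≠ ψ .y ∧
      ψ (.apex i h) ≠ ψ (bvert (i + 1)))
    (hfan : ∀ i : Fin k, IsFanColoring (ψ (bvert i)) (ψ (hub i)) (ψ (bvert (i + 1)))
      fun j => ψ (.pv i j))
    {u v : PVert k ord fat} (huv : (procGraph k ord fat).Adj u v) : ψ u ≠ ψ v := by
  refine SimpleGraph.fromEdgeSet_adj_ne (fun e he => ?_) huv
  simp only [Set.mem_union, Set.mem_insert_iff, Set.mem_singleton_iff, Set.mem_ofPred_eq] at he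
  rcases he with (((((((rfl | rfl) | ⟨i, h, rfl⟩) | ⟨i, h, rfl | rfl | rfl⟩) | ⟨i, j, rfl⟩) |
      ⟨i, j, hj, rfl⟩) | ⟨i, j, j', hjj', rfl⟩) | ⟨i, j, hj, rfl⟩) | ⟨i, -, hi, rfl⟩ <;>
    simp only [Sym2.map_mk, Sym2.mk_isDiag_iff]
  exacts [hxy, hyz, (hbnd i h).symm, (hapex i h).1, (hapex i h).2.1, (hapex i h).2.2,
    ((hfan i).ne_hub j).symm, ((hfan i).ne_left j hj).symm, (hfan i).ne_succ j j' hjj',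
    (hfan i).ne_right j hj, (hfan i).left_ne_right hi]

def procColoring (cx cy cz : α) (c : ℕ → α) (A : Fin k → α) (P : ∀ i, Fin (ord i) → α) :
    PVert k ord fat → α
  | .x => cx
  | .y => cy
  | .z => cz
  | .bnd i _ => c i
  | .apex i _ => A i
  | .pv i j => P i j

variable {cx cy cz : α} {c : ℕ → α} {A : Fin k → α} {P : ∀ i, Fin (ord i) → α}

theorem procColoring_bvert (hx : c 0 = cx) (hz : c k = cz) {i : ℕ} (hi : i ≤ k) :
    procColoring (fat := fat) cx cy cz c A P (bvert i) = c i := by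
  unfold bvert
  split_ifs with h0 hk
  · simp [procColoring, h0, hx]
  · simp [procColoring, le_antisymm hi hk, hz]
  · rfl

theorem procColoring_hub (i : Fin k) :
    procColoring (fat := fat) cx cy cz c A P (hub i) = if fat i then A i else cy := by
  unfold hub
  split_ifs <;> rfl

/-- `A` is the apex color, ignored unless piece `i` is a fat fan. -/
def IsPieceColoring (L : PVert k ord fat → Finset α) (i : Fin k) (u cy w A : α)
    (p : Fin (ord i) → α) : Prop :=
  (∀ h : fat i = true, A ∈ L (.apex i h) ∧ A ≠ u ∧ A ≠ cy ∧ A ≠ w) ∧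
    (∀ j, p j ∈ L (.pv i j)) ∧ IsFanColoring u (if fat i then A else cy) w p

theorem extendsProc_of_isPieceColoring {L : PVert k ord fat → Finset α} (hx : c 0 = cx)
    (hz : c k = cz) (hxy : cx ≠ cy) (hyz : cy ≠ cz) (hcL : ∀ i h, c i ∈ L (.bnd i h))
    (hcy : ∀ (i : Fin k) (_ : (i : ℕ) ≠ 0), c i ≠ cy)
    (hpiece : ∀ i, IsPieceColoring L i (c i) cy (c (i + 1)) (A i) (P i)) :
    ExtendsProc L cx cy cz := by
  have hleft (i : Fin k) : procColoring (fat := fat) cx cy cz c A P (bvert i) = c i :=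
    procColoring_bvert hx hz i.isLt.le
  have hright (i : Fin k) : procColoring (fat := fat) cx cy cz c A P (bvert (i + 1)) = c (i + 1) :=
    procColoring_bvert hx hz i.isLt
  refine ⟨procColoring cx cy cz c A P, fun u v huv => procGraph_adj_ne hxy hyz hcy
    (fun i h => ?_) (fun i => ?_) huv, rfl, rfl, rfl, ?_⟩
  · rw [hleft, hright]
    exact ((hpiece i).1 h).2
  · rw [hleft, hright, procColoring_hub]
    exact (hpiece i).2.2
  · rintro (_ | _ | _ | ⟨i, h⟩ | ⟨i, h⟩ | ⟨i, j⟩) hx hy hz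
    · exact absurd rfl hx
    · exact absurd rfl hy
    · exact absurd rfl hz
    · exact hcL i h
    · exact ((hpiece i).1 h).1
    · exact (hpiece i).2.1 j

variable [DecidableEq α] {L : PVert k ord fat → Finset α}

theorem exists_isPieceColoring (hL : DangerousProc L) (i : Fin k) (u cy : α) :
    ∃ b, ∀ w, w ≠ cy → w ≠ b → ∃ A p, IsPieceColoring L i u cy w A p := by
  have hLp (j : Fin (ord i)) : 3 ≤ (L (.pv i j)).card := (hL.2.1 i j).ge
  cases hfat : fat i with
  | false =>
    obtain ⟨b, hb⟩ := exists_fanColoring u cy _ hLp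
    refine ⟨b, fun w hwy hwb => ?_⟩
    obtain ⟨p, hpL, hp⟩ := hb w hwy hwb
    exact ⟨u, p, by simp [hfat], hpL, by simpa [hfat] using hp⟩
  | true =>
    obtain ⟨b, hb⟩ := exists_fatFanColoring u cy (hL.2.2 i hfat).ge _ hLp
    refine ⟨b, fun w _ hwb => ?_⟩
    obtain ⟨A, hAL, hAu, hAy, hAw, p, hpL, hp⟩ := hb w hwb
    exact ⟨A, p, fun _ => ⟨hAL, hAu, hAy, hAw⟩, hpL, by simpa [hfat] using hp⟩

theorem exists_boundaryColors (hL : DangerousProc L) (cx cy : α) (bad : Fin k → α → α) :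
    ∃ c : ℕ → α, c 0 = cx ∧ ∀ i (hi : i + 1 < k), c (i + 1) ∈ L (.bnd ⟨i + 1, hi⟩ i.succ_ne_zero) ∧
      c (i + 1) ≠ cy ∧ c (i + 1) ≠ bad ⟨i, by omega⟩ (c i) := by
  have hnext (i : ℕ) (u : α) : ∃ a, ∀ hi : i + 1 < k,
      a ∈ L (.bnd ⟨i + 1, hi⟩ i.succ_ne_zero) ∧ a ≠ cy ∧ a ≠ bad ⟨i, by omega⟩ u := by
    by_cases hi : i + 1 < k
    · obtain ⟨a, haL, hay, hab⟩ :=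
        Finset.exists_mem_ne_ne (hL.1 ⟨i + 1, hi⟩ i.succ_ne_zero).ge cy (bad ⟨i, by omega⟩ u)
      exact ⟨a, fun _ => ⟨haL, hay, hab⟩⟩
    · exact ⟨u, fun hi' => absurd hi' hi⟩
  choose next hnext using hnext
  exact ⟨fun n => Nat.rec cx (fun i u => next i u) n, rfl, fun i => hnext i _⟩

theorem exists_extendsProc (hk : 1 ≤ k) (hL : DangerousProc L) {cx cy : α} (hxy : cx ≠ cy) :
    ∃ b, ∀ w, w ≠ cy → w ≠ b → ExtendsProc L cx cy w := by
  choose bad hbad using fun i u => exists_isPieceColoring hL i u cy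
  obtain ⟨c, hc0, hc⟩ := exists_boundaryColors hL cx cy bad
  have hk0 : 0 < k := hk
  refine ⟨bad ⟨k - 1, by omega⟩ (c (k - 1)), fun w hwy hwb => ?_⟩
  let c' (n : ℕ) : α := if n < k then c n else w
  have hright (i : Fin k) : c' (i + 1) ≠ cy ∧ c' (i + 1) ≠ bad i (c' i) := by
    by_cases hi : (i : ℕ) + 1 < k
    · simpa [c', hi] using (hc i hi).2
    · rw [show i = ⟨k - 1, by omega⟩ from Fin.ext (by simp; omega)]
      simpa [c', Nat.sub_add_cancel hk, hk0] using ⟨hwy, hwb⟩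
  choose A P hAP using fun i => hbad i _ _ (hright i).1 (hright i).2
  have hbnd (i : Fin k) (h : (i : ℕ) ≠ 0) : c' i ∈ L (.bnd i h) ∧ c' i ≠ cy := by
    obtain ⟨_ | i, hi⟩ := i
    · exact absurd rfl h
    · simpa [c', hi] using ⟨(hc i hi).1, (hc i hi).2.1⟩
  exact extendsProc_of_isPieceColoring (c := c') (by simp [c', hk0, hc0]) (by simp [c'])
    hxy hwy.symm (fun i h => (hbnd i h).1) (fun i h => (hbnd i h).2) hAP

end Procession

theorem procession_nonextendable_agree_general {k : ℕ} {ord : Fin k → ℕ}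
    {fat : Fin k → Bool} {α : Type*}
    (hk : 1 ≤ k)
    (L : PVert k ord fat → Finset α) (hL : DangerousProc L)
    (cx cy cz cz' : α)
    (h1 : IsPrecolProc k ord fat cx cy cz)
    (h2 : IsPrecolProc k ord fat cx cy cz')
    (hne1 : ¬ ExtendsProc L cx cy cz)
    (hne2 : ¬ ExtendsProc L cx cy cz') :
    cz = cz' := by
  classical
  obtain ⟨b, hb⟩ := exists_extendsProc hk hL h1.1
  have hz : cz = b := by_contra fun h => hne1 (hb cz h1.2.1.symm h)
  have hz' : cz' = b := by_contra fun h => hne2 (hb cz' h2.2.1.symm h)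
  exact hz.trans hz'.symm

/-- Two non-extendable precolorings of the base of a fan procession with a
dangerous list assignment that agree on `x` and `y` are equal. -/
theorem procession_nonextendable_agree {k : ℕ} {ord : Fin k → ℕ}
    {fat : Fin k → Bool} {α : Type*}
    (hk : 1 ≤ k) (hfat : ∀ i : Fin k, fat i = true → 1 ≤ ord i)
    (L : PVert k ord fat → Finset α) (hL : DangerousProc L)
    (cx cy cz cz' : α)
    (h1 : IsPrecolProc k ord fat cx cy cz)
    (h2 : IsPrecolProc k ord fat cx cy cz')
    (hne1 : ¬ ExtendsProc L cx cy cz)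
    (hne2 : ¬ ExtendsProc L cx cy cz') :
    cz = cz' :=
  procession_nonextendable_agree_general hk L hL cx cy cz cz' h1 h2 hne1 hne2
end

section
/- Let G be a fan procession with base xyz and let L be a dangerous list assignment for G. If some precoloring of the base xyz does not extend to an L-coloring of G, then G is an even fan procession, i.e., every constituent fat fan of G has even order. -/
/-!
Suppose the fat fan `G_{i₀}` has odd order. It can then be colored whatever colors its ends
`v_{i₀}, v_{i₀+1}` receive: if two apex colors `p ≠ q` both failed, the lists of the path
`v_{i₀} … v_{i₀+1}` with `p` (resp. `q`) removed would have size two and be forced, each of the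
form `{s_j, s_{j+1}}`, and comparing the two forced chains shows that they alternate with period
two, which is impossible for a path of odd order.

Every piece, on the other hand, fails for at most one color of one end once the other end is
colored, since from a given end there is at most one forced chain. As the lists of the vertices
`v_m` have three colors, one can color `v_1, …, v_{i₀}` greedily starting from `x`, avoiding the
color of `y` and the one bad color, and likewise `v_{k-1}, …, v_{i₀+1}` starting from `z`; the
piece `G_{i₀}` in between is colorable anyway.
-/

namespace FanProcession

section Paths

variable {α : Type*}

/-- `P` colors the path `a, v₀, …, v_{n-1}, b` from its list assignment `v_j ↦ M j`: positions
`0` and `n + 1` are the precolored ends, position `j + 1` is `v_j`. -/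
def IsPathColoring (M : ℕ → Finset α) (a b : α) (n : ℕ) (P : ℕ → α) : Prop :=
  P 0 = a ∧ P (n + 1) = b ∧ (∀ j < n, P (j + 1) ∈ M j) ∧ ∀ j ≤ n, P j ≠ P (j + 1)

def PathColorable (M : ℕ → Finset α) (a b : α) (n : ℕ) : Prop :=
  ∃ P, IsPathColoring M a b n P

lemma PathColorable.snoc {M : ℕ → Finset α} {a b c : α} {n : ℕ}
    (h : PathColorable M a c n) (hc : c ∈ M n) (hcb : c ≠ b) :
    PathColorable M a b (n + 1) := by
  obtain ⟨P, hP0, hPn, hPmem, hPne⟩ := h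
  refine ⟨Function.update P (n + 2) b, by simp [hP0], by simp, fun j hj => ?_, fun j hj => ?_⟩
  · rw [Function.update_of_ne (by omega)]
    rcases Nat.lt_succ_iff_lt_or_eq.1 hj with hj | rfl
    exacts [hPmem j hj, hPn ▸ hc]
  · rcases Nat.lt_succ_iff_lt_or_eq.1 (Nat.lt_succ_of_le hj) with hj | rfl
    · rw [Function.update_of_ne (by omega), Function.update_of_ne (by omega)]
      exact hPne j (by omega)
    · simpa [hPn] using hcb

variable [DecidableEq α]

def IsForcedChain (M : ℕ → Finset α) (s : ℕ → α) (n : ℕ) : Prop :=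
  ∀ j < n, s j ≠ s (j + 1) ∧ M j = {s j, s (j + 1)}

namespace IsForcedChain

variable {M : ℕ → Finset α} {s t : ℕ → α} {n : ℕ}

lemma eq_last_of_eq_zero (hs : IsForcedChain M s n) (ht : IsForcedChain M t n)
    (h0 : s 0 = t 0) : s n = t n := by
  suffices ∀ j ≤ n, s j = t j from this n le_rfl
  intro j hj
  induction j with
  | zero => exact h0
  | succ j ih =>
    have hmem : s (j + 1) ∈ M j := by rw [(hs j hj).2]; simp
    rw [(ht j hj).2] at hmem
    simpa [← ih (by omega), Ne.symm (hs j hj).1] using hmem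

lemma eq_zero_of_eq_last (hs : IsForcedChain M s n) (ht : IsForcedChain M t n)
    (hn : s n = t n) : s 0 = t 0 := by
  suffices ∀ d m, m + d = n → s m = t m from this n 0 (by omega)
  intro d
  induction d with
  | zero => rintro m rfl; exact hn
  | succ d ih =>
    intro m hm
    have hmem : s m ∈ M m := by rw [(hs m (by omega)).2]; simp
    rw [(ht m (by omega)).2, Finset.pair_comm] at hmem
    simpa [← ih (m + 1) (by omega), (hs m (by omega)).1] using hmem

end IsForcedChain

variable {M : ℕ → Finset α}

lemma exists_forcedChain_of_not_pathColorable {a b : α} {n : ℕ}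
    (hM : ∀ j < n, 2 ≤ (M j).card) (h : ¬PathColorable M a b n) :
    ∃ s, s 0 = a ∧ s n = b ∧ IsForcedChain M s n := by
  induction n generalizing b with
  | zero =>
    refine ⟨fun _ => a, rfl, of_not_not fun hab => h ?_, fun j hj => absurd hj j.not_lt_zero⟩
    exact ⟨fun j => if j = 0 then a else b, rfl, rfl, fun j hj => absurd hj j.not_lt_zero,
      fun j hj => by simpa [Nat.le_zero.1 hj] using hab⟩
  | succ n ih =>
    have chain_to : ∀ c ∈ M n, c ≠ b → ∃ s, s 0 = a ∧ s n = c ∧ IsForcedChain M s n :=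
      fun c hc hcb => ih (fun j hj => hM j (by omega)) fun hP => h (hP.snoc hc hcb)
    obtain ⟨c, hc, hcb⟩ := Finset.exists_mem_ne (hM n n.lt_succ_self) b
    obtain ⟨s, hs0, hsn, hs⟩ := chain_to c hc hcb
    have hMn : M n = {c, b} := by
      refine Finset.eq_of_subset_of_card_le (fun d hd => ?_) ?_
      · by_cases hdb : d = b
        · simp [hdb]
        · obtain ⟨t, ht0, htn, ht⟩ := chain_to d hd hdb
          simp [← htn, ← hsn, ht.eq_last_of_eq_zero hs (ht0.trans hs0.symm)]
      · exact (Finset.card_le_two).trans (hM n n.lt_succ_self)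
    refine ⟨Function.update s (n + 1) b, by simp [hs0], by simp, fun j hj => ?_⟩
    rw [Function.update_of_ne (by omega)]
    rcases Nat.lt_succ_iff_lt_or_eq.1 hj with hj | rfl
    · rw [Function.update_of_ne (by omega)]
      exact hs j hj
    · simpa [hsn, hMn] using hcb

lemma pathColorable_row {n : ℕ} (hM : ∀ j < n, 2 ≤ (M j).card) (a : α) :
    {b | ¬PathColorable M a b n}.Subsingleton := by
  intro b hb b' hb'
  obtain ⟨s, hs0, hsn, hs⟩ := exists_forcedChain_of_not_pathColorable hM hb
  obtain ⟨t, ht0, htn, ht⟩ := exists_forcedChain_of_not_pathColorable hM hb'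
  rw [← hsn, ← htn, hs.eq_last_of_eq_zero ht (hs0.trans ht0.symm)]

lemma pathColorable_col {n : ℕ} (hM : ∀ j < n, 2 ≤ (M j).card) (b : α) :
    {a | ¬PathColorable M a b n}.Subsingleton := by
  intro a ha a' ha'
  obtain ⟨s, hs0, hsn, hs⟩ := exists_forcedChain_of_not_pathColorable hM ha
  obtain ⟨t, ht0, htn, ht⟩ := exists_forcedChain_of_not_pathColorable hM ha'
  rw [← hs0, ← ht0, hs.eq_zero_of_eq_last ht (hsn.trans htn.symm)]

lemma eq_insert_of_erase_eq_pair {L : Finset α} {p u v : α} (hL : L.card = 3)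
    (h : L.erase p = {u, v}) (huv : u ≠ v) : L = {p, u, v} := by
  have hp : p ∈ L := by
    by_contra hp
    rw [Finset.erase_eq_of_notMem hp] at h
    simp [h, huv] at hL
  rw [← h, Finset.insert_erase hp]

lemma erase_pair_alternation {L : Finset α} {p q s₀ s₁ t₀ t₁ : α} (hL : L.card = 3)
    (hs : L.erase p = {s₀, s₁}) (hs₀₁ : s₀ ≠ s₁) (ht : L.erase q = {t₀, t₁}) (ht₀₁ : t₀ ≠ t₁)
    (hpq : p ≠ q) :
    (s₀ = t₀ → s₀ ≠ p → s₀ ≠ q → s₁ = q ∧ t₁ = p) ∧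
      (s₀ = q → t₀ = p → s₁ = t₁ ∧ s₁ ≠ p ∧ s₁ ≠ q) := by
  have hLst : ({p, s₀, s₁} : Finset α) = {q, t₀, t₁} := by
    rw [← eq_insert_of_erase_eq_pair hL hs hs₀₁, ← eq_insert_of_erase_eq_pair hL ht ht₀₁]
  have hs₀p : s₀ ≠ p := Finset.ne_of_mem_erase (s := L) (by simp [hs])
  have hs₁p : s₁ ≠ p := Finset.ne_of_mem_erase (s := L) (by simp [hs])
  simp only [Finset.ext_iff, Finset.mem_insert, Finset.mem_singleton] at hLst
  have hp := hLst p
  have hq := hLst q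
  have hs₁ := hLst s₁
  have ht₁ := hLst t₁
  grind

/-- Removing either of two colors `p ≠ q` from lists of size three forces chains that agree
at even positions and read `q`, `p` at odd ones. -/
lemma even_of_forcedChains {L : ℕ → Finset α} {n : ℕ} {p q : α} {s t : ℕ → α}
    (hL : ∀ j < n, (L j).card = 3) (hpq : p ≠ q)
    (hs : IsForcedChain (fun j => (L j).erase p) s n)
    (ht : IsForcedChain (fun j => (L j).erase q) t n)
    (h₀ : s 0 = t 0) (h₀p : s 0 ≠ p) (h₀q : s 0 ≠ q) (hn : s n ≠ q) : Even n := by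
  have key : ∀ j ≤ n, (Even j → s j = t j ∧ s j ≠ p ∧ s j ≠ q) ∧ (Odd j → s j = q ∧ t j = p) := by
    intro j hj
    induction j with
    | zero => exact ⟨fun _ => ⟨h₀, h₀p, h₀q⟩, fun h => absurd h Nat.not_odd_zero⟩
    | succ j ih =>
      have step := erase_pair_alternation (hL j hj) (hs j hj).2 (hs j hj).1 (ht j hj).2
        (ht j hj).1 hpq
      rcases Nat.even_or_odd j with he | ho
      · obtain ⟨hst, hsp, hsq⟩ := (ih (by omega)).1 he
        exact ⟨fun h => absurd h (Nat.not_even_iff_odd.2 he.add_one),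
          fun _ => step.1 hst hsp hsq⟩
      · obtain ⟨hsq, htp⟩ := (ih (by omega)).2 ho
        exact ⟨fun _ => step.2 hsq htp, fun h => absurd ho.add_one (Nat.not_even_iff_odd.2 h)⟩
  by_contra hodd
  exact hn ((key n le_rfl).2 (Nat.not_even_iff_odd.1 hodd)).1

end Paths

section Sequences

variable {α : Type*}

lemma exists_mem_of_nontrivial_of_subsingleton {s : Set α} {p : α → Prop} (hs : s.Nontrivial)
    (hp : {b | ¬p b}.Subsingleton) : ∃ b ∈ s, p b := by
  by_contra h
  exact hs.not_subsingleton (hp.anti fun b hb hpb => h ⟨b, hb, hpb⟩)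

lemma exists_seq_of_forall_exists {R : ℕ → α → α → Prop} {A : ℕ → Set α} {n : ℕ}
    (hstep : ∀ m < n, ∀ a, ∃ b ∈ A (m + 1), R m a b) (a₀ : α) :
    ∃ B : ℕ → α, B 0 = a₀ ∧ ∀ m < n, B (m + 1) ∈ A (m + 1) ∧ R m (B m) (B (m + 1)) := by
  induction n with
  | zero => exact ⟨fun _ => a₀, rfl, fun m hm => absurd hm m.not_lt_zero⟩
  | succ n ih =>
    obtain ⟨B, hB0, hB⟩ := ih fun m hm => hstep m (by omega)
    obtain ⟨b, hb, hR⟩ := hstep n n.lt_succ_self (B n)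
    refine ⟨Function.update B (n + 1) b, by simp [hB0], fun m hm => ?_⟩
    rcases Nat.lt_succ_iff_lt_or_eq.1 hm with hm | rfl
    · rw [Function.update_of_ne (by omega), Function.update_of_ne (by omega)]
      exact hB m hm
    · simpa [Function.update_of_ne (by omega : m ≠ m + 1)] using ⟨hb, hR⟩

lemma exists_boundary_seq {k : ℕ} (R : Fin k → α → α → Prop) (A : ℕ → Set α) (i₀ : Fin k)
    (hA : ∀ m, 0 < m → m < k → (A m).Nontrivial)
    (hrow : ∀ i < i₀, ∀ a, {b | ¬R i a b}.Subsingleton)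
    (hcol : ∀ i, i₀ < i → ∀ b, {a | ¬R i a b}.Subsingleton)
    (htot : ∀ a b, R i₀ a b) (a₀ b₀ : α) :
    ∃ B : ℕ → α, B 0 = a₀ ∧ B k = b₀ ∧ (∀ m, 0 < m → m < k → B m ∈ A m) ∧
      ∀ i : Fin k, R i (B i) (B (i + 1)) := by
  obtain ⟨Bl, hBl0, hBl⟩ := exists_seq_of_forall_exists
    (R := fun m a b => ∀ i : Fin k, (i : ℕ) = m → R i a b) (A := A) (n := i₀)
    (fun m hm a => by
      obtain ⟨b, hb, hR⟩ := exists_mem_of_nontrivial_of_subsingleton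
        (hA (m + 1) (by omega) (by omega)) (hrow ⟨m, by omega⟩ (Fin.lt_def.2 hm) a)
      exact ⟨b, hb, fun ⟨i, _⟩ hi => by subst hi; exact hR⟩) a₀
  -- the same construction on the reversed procession, `Br m` being the color of `v_{k-m}`
  obtain ⟨Br, hBr0, hBr⟩ := exists_seq_of_forall_exists
    (R := fun m a b => ∀ i : Fin k, (i : ℕ) = k - 1 - m → R i b a) (A := fun m => A (k - m))
    (n := k - 1 - i₀)
    (fun m hm b => by
      obtain ⟨a, ha, hR⟩ := exists_mem_of_nontrivial_of_subsingleton
        (hA (k - (m + 1)) (by omega) (by omega))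
        (hcol ⟨k - 1 - m, by omega⟩ (Fin.lt_def.2 (by simp only; omega)) b)
      exact ⟨a, ha, fun ⟨i, _⟩ hi => by subst hi; exact hR⟩) b₀
  refine ⟨fun m => if m ≤ i₀ then Bl m else Br (k - m), by simp [hBl0],
    by simp [show ¬k ≤ i₀ by omega, hBr0], fun m hm hmk => ?_, fun i => ?_⟩
  · dsimp only
    split_ifs with hmi
    · obtain ⟨d, rfl⟩ : ∃ d, m = d + 1 := ⟨m - 1, by omega⟩
      exact (hBl d (by omega)).1
    · have := (hBr (k - m - 1) (by omega)).1
      rwa [show k - m - 1 + 1 = k - m by omega, show k - (k - m) = m by omega] at this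
  · rcases lt_trichotomy i i₀ with hi | rfl | hi
    · rw [Fin.lt_def] at hi
      simpa [hi.le, Nat.succ_le_of_lt hi] using (hBl i hi).2 i rfl
    · exact htot _ _
    · rw [Fin.lt_def] at hi
      have := (hBr (k - 1 - i) (by omega)).2 i (by omega)
      rw [show k - 1 - i + 1 = k - i by omega, show k - 1 - i = k - (i + 1) by omega] at this
      simpa [hi.not_ge, show ¬(i : ℕ) + 1 ≤ i₀ by omega] using this

end Sequences

section Pieces

variable {k : ℕ} {ord : Fin k → ℕ} {fat : Fin k → Bool} {α : Type*}

lemma bvert_of_ne_zero (i : Fin k) (hi : (i : ℕ) ≠ 0) :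
    (bvert i : PVert k ord fat) = PVert.bnd i hi := by
  simp [bvert, hi]

def pathLists (L : PVert k ord fat → Finset α) (i : Fin k) (j : ℕ) : Finset α :=
  if h : j < ord i then L (.pv i ⟨j, h⟩) else ∅

lemma card_pathLists {L : PVert k ord fat → Finset α} {i : Fin k}
    (hpv : ∀ j, (L (.pv i j)).card = 3) : ∀ j < ord i, (pathLists L i j).card = 3 := by
  intro j hj
  simp [pathLists, hj, hpv]

variable [DecidableEq α]

def hubColors (L : PVert k ord fat → Finset α) (cy : α) (i : Fin k) (a b : α) : Finset α :=
  if hf : fat i = true then L (.apex i hf) \ {a, b, cy} else {cy}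

/-- Piece `i` can be colored once its ends `v_i, v_{i+1}` get `a, b` and `y` gets `cy`. For a
fat fan of order `0` this also asks `a ≠ b`, although `v_i v_{i+1}` is then no edge. -/
def PieceColorable (L : PVert k ord fat → Finset α) (cy : α) (i : Fin k) (a b : α) : Prop :=
  ∃ h ∈ hubColors L cy i a b, PathColorable (fun j => (pathLists L i j).erase h) a b (ord i)

variable {L : PVert k ord fat → Finset α} {cy : α} {i : Fin k}

lemma two_le_card_erase_pathLists (hpv : ∀ j, (L (.pv i j)).card = 3) (h : α) :
    ∀ j < ord i, 2 ≤ ((pathLists L i j).erase h).card := by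
  intro j hj
  have := Finset.pred_card_le_card_erase (s := pathLists L i j) (a := h)
  rw [card_pathLists hpv j hj] at this
  omega

lemma exists_mem_hubColors (hapex : ∀ hf : fat i = true, (L (.apex i hf)).card = 5)
    (T : Finset α) (hT : T.card ≤ 3) : ∃ h, ∀ a ∈ T, ∀ b ∈ T, h ∈ hubColors L cy i a b := by
  by_cases hf : fat i = true
  · have hcard : (insert cy T).card < (L (.apex i hf)).card := by
      have := Finset.card_insert_le cy T
      have := hapex hf
      omega
    obtain ⟨h, hL, hT⟩ := Finset.exists_mem_notMem_of_card_lt_card hcard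
    refine ⟨h, fun a ha b hb => ?_⟩
    simp only [hubColors, hf, dif_pos, Finset.mem_sdiff, Finset.mem_insert,
      Finset.mem_singleton]
    exact ⟨hL, by rintro (rfl | rfl | rfl) <;> simp_all⟩
  · exact ⟨cy, fun a _ b _ => by simp [hubColors, hf]⟩

lemma PieceColorable.row (hpv : ∀ j, (L (.pv i j)).card = 3)
    (hapex : ∀ hf : fat i = true, (L (.apex i hf)).card = 5) (a : α) :
    {b | ¬PieceColorable L cy i a b}.Subsingleton := by
  intro b hb b' hb'
  obtain ⟨h, hh⟩ := exists_mem_hubColors (cy := cy) hapex {a, b, b'} Finset.card_le_three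
  exact pathColorable_row (two_le_card_erase_pathLists hpv h) a
    (fun hP => hb ⟨h, hh a (by simp) b (by simp), hP⟩)
    (fun hP => hb' ⟨h, hh a (by simp) b' (by simp), hP⟩)

lemma PieceColorable.col (hpv : ∀ j, (L (.pv i j)).card = 3)
    (hapex : ∀ hf : fat i = true, (L (.apex i hf)).card = 5) (b : α) :
    {a | ¬PieceColorable L cy i a b}.Subsingleton := by
  intro a ha a' ha'
  obtain ⟨h, hh⟩ := exists_mem_hubColors (cy := cy) hapex {a, a', b} Finset.card_le_three
  exact pathColorable_col (two_le_card_erase_pathLists hpv h) b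
    (fun hP => ha ⟨h, hh a (by simp) b (by simp), hP⟩)
    (fun hP => ha' ⟨h, hh a' (by simp) b (by simp), hP⟩)

lemma pieceColorable_of_odd (hpv : ∀ j, (L (.pv i j)).card = 3) (hf : fat i = true)
    (hapex : (L (.apex i hf)).card = 5) (hodd : Odd (ord i)) (a b : α) :
    PieceColorable L cy i a b := by
  by_contra hne
  have hfail : ∀ p ∈ L (.apex i hf) \ {a, b, cy},
      ¬PathColorable (fun j => (pathLists L i j).erase p) a b (ord i) :=
    fun p hp hP => hne ⟨p, by simpa [hubColors, hf] using hp, hP⟩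
  have hcard : 1 < (L (.apex i hf) \ {a, b, cy}).card := by
    have := Finset.le_card_sdiff {a, b, cy} (L (.apex i hf))
    have := Finset.card_le_three (a := a) (b := b) (c := cy)
    omega
  obtain ⟨p, hp, q, hq, hpq⟩ := Finset.one_lt_card.1 hcard
  obtain ⟨s, hs0, hsn, hs⟩ := exists_forcedChain_of_not_pathColorable
    (two_le_card_erase_pathLists hpv p) (hfail p hp)
  obtain ⟨t, ht0, -, ht⟩ := exists_forcedChain_of_not_pathColorable
    (two_le_card_erase_pathLists hpv q) (hfail q hq)
  simp only [Finset.mem_sdiff, Finset.mem_insert, Finset.mem_singleton, not_or] at hp hq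
  exact Nat.not_even_iff_odd.2 hodd (even_of_forcedChains (card_pathLists hpv) hpq hs ht
    (hs0.trans ht0.symm) (hs0 ▸ Ne.symm hp.2.1) (hs0 ▸ Ne.symm hq.2.1) (hsn ▸ Ne.symm hq.2.2.1))

end Pieces

section Assembly

variable {k : ℕ} {ord : Fin k → ℕ} {fat : Fin k → Bool} {α : Type*}

def glueColoring (cx cy cz : α) (B : ℕ → α) (c : Fin k → α) (P : Fin k → ℕ → α) :
    PVert k ord fat → α
  | .x => cx
  | .y => cy
  | .z => cz
  | .bnd i _ => B i
  | .apex i _ => c i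
  | .pv i j => P i (j + 1)

variable {cx cy cz : α} {B : ℕ → α} {c : Fin k → α} {P : Fin k → ℕ → α}

lemma glueColoring_bvert (hB0 : B 0 = cx) (hBk : B k = cz) {m : ℕ} (hm : m ≤ k) :
    glueColoring (ord := ord) (fat := fat) cx cy cz B c P (bvert m) = B m := by
  unfold bvert
  split_ifs with h0 hk
  · simp [glueColoring, h0, hB0]
  · simp [glueColoring, show m = k by omega, hBk]
  · rfl

lemma glueColoring_hub (hc : ∀ i, fat i = false → c i = cy) (i : Fin k) :
    glueColoring (ord := ord) (fat := fat) cx cy cz B c P (hub i) = c i := by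
  unfold hub
  split_ifs with hf
  · rfl
  · exact (hc i (by simpa using hf)).symm

lemma ne_of_sym2_eq {V : Type*} {f : V → α} {u w p q : V} (h : s(u, w) = s(p, q))
    (hpq : f p ≠ f q) : f u ≠ f w := by
  rcases Sym2.eq_iff.1 h with ⟨rfl, rfl⟩ | ⟨rfl, rfl⟩
  exacts [hpq, hpq.symm]

variable [DecidableEq α] {L : PVert k ord fat → Finset α}

lemma eq_of_mem_hubColors {i : Fin k} {a b h : α} (hh : h ∈ hubColors L cy i a b)
    (hf : fat i = false) : h = cy := by
  simpa [hubColors, hf] using hh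

lemma mem_apex_of_mem_hubColors {i : Fin k} {a b h : α} (hh : h ∈ hubColors L cy i a b)
    (hf : fat i = true) : h ∈ L (.apex i hf) ∧ h ≠ a ∧ h ≠ b ∧ h ≠ cy := by
  simpa [hubColors, hf, not_or] using hh

lemma mem_erase_of_isPathColoring {i : Fin k} {a b h : α} {Q : ℕ → α}
    (hQ : IsPathColoring (fun j => (pathLists L i j).erase h) a b (ord i) Q) (j : Fin (ord i)) :
    Q (j + 1) ∈ (L (.pv i j)).erase h := by
  simpa [pathLists] using hQ.2.2.1 j j.isLt

section

variable (hB : ∀ (i : Fin k) (hi : (i : ℕ) ≠ 0), B i ∈ (L (.bnd i hi)).erase cy)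
  (hc : ∀ i : Fin k, c i ∈ hubColors L cy i (B i) (B (i + 1)))
  (hP : ∀ i : Fin k,
    IsPathColoring (fun j => (pathLists L i j).erase (c i)) (B i) (B (i + 1)) (ord i) (P i))
include hB hc hP

lemma glueColoring_adj_ne (hxy : cx ≠ cy) (hyz : cy ≠ cz) (hB0 : B 0 = cx) (hBk : B k = cz)
    {u w : PVert k ord fat} (hadj : (procGraph k ord fat).Adj u w) :
    glueColoring cx cy cz B c P u ≠ glueColoring cx cy cz B c P w := by
  have hψB : ∀ m ≤ k, glueColoring cx cy cz B c P (bvert m : PVert k ord fat) = B m :=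
    fun m => glueColoring_bvert hB0 hBk
  obtain ⟨hmem, -⟩ := (SimpleGraph.fromEdgeSet_adj _).1 hadj
  simp only [Set.mem_union, Set.mem_insert_iff, Set.mem_singleton_iff, Set.mem_ofPred_eq]
    at hmem
  rcases hmem with ((((((((h | h) | ⟨i, hi, h⟩) | ⟨i, hf, h | h | h⟩) | ⟨i, j, h⟩) |
    ⟨i, j, hj, h⟩) | ⟨i, j, j', hj, h⟩) | ⟨i, j, hj, h⟩) | ⟨i, hf, h0, h⟩) <;>
    refine ne_of_sym2_eq h ?_
  · exact hxy
  · exact hyz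
  · exact (Finset.ne_of_mem_erase (hB i hi)).symm
  · rw [hψB i i.isLt.le]
    exact (mem_apex_of_mem_hubColors (hc i) hf).2.1
  · exact (mem_apex_of_mem_hubColors (hc i) hf).2.2.2
  · rw [hψB (i + 1) i.isLt]
    exact (mem_apex_of_mem_hubColors (hc i) hf).2.2.1
  · rw [glueColoring_hub fun i hf => eq_of_mem_hubColors (hc i) hf]
    exact (Finset.ne_of_mem_erase (mem_erase_of_isPathColoring (hP i) j)).symm
  · rw [hψB i i.isLt.le, ← (hP i).1]
    exact hj ▸ (hP i).2.2.2 0 (Nat.zero_le _)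
  · show P i (j + 1) ≠ P i (j' + 1)
    rw [← hj]
    exact (hP i).2.2.2 (j + 1) (by omega)
  · rw [hψB (i + 1) i.isLt, ← (hP i).2.1]
    exact (show (j : ℕ) + 1 = ord i by omega) ▸ (hP i).2.2.2 (ord i) le_rfl
  · rw [hψB i i.isLt.le, hψB (i + 1) i.isLt, ← (hP i).1, ← (hP i).2.1, h0]
    exact (hP i).2.2.2 0 (Nat.zero_le _)

lemma glueColoring_mem (w : PVert k ord fat) (hx : w ≠ .x) (hy : w ≠ .y) (hz : w ≠ .z) :
    glueColoring cx cy cz B c P w ∈ L w := by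
  cases w with
  | x => exact absurd rfl hx
  | y => exact absurd rfl hy
  | z => exact absurd rfl hz
  | bnd i hi => exact Finset.mem_of_mem_erase (hB i hi)
  | apex i hf => exact (mem_apex_of_mem_hubColors (hc i) hf).1
  | pv i j => exact Finset.mem_of_mem_erase (mem_erase_of_isPathColoring (hP i) j)

end

lemma extendsProc_of_pieceColorable (hxy : cx ≠ cy) (hyz : cy ≠ cz) (hB0 : B 0 = cx)
    (hBk : B k = cz) (hB : ∀ m, 0 < m → m < k → B m ∈ (L (bvert m)).erase cy)
    (hpiece : ∀ i : Fin k, PieceColorable L cy i (B i) (B (i + 1))) :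
    ExtendsProc L cx cy cz := by
  choose c hc P hP using hpiece
  have hBbnd : ∀ (i : Fin k) (hi : (i : ℕ) ≠ 0), B i ∈ (L (.bnd i hi)).erase cy := fun i hi => by
    simpa [bvert_of_ne_zero i hi] using hB i (Nat.pos_of_ne_zero hi) i.isLt
  exact ⟨glueColoring cx cy cz B c P, fun u w => glueColoring_adj_ne hBbnd hc hP hxy hyz hB0 hBk,
    rfl, rfl, rfl, glueColoring_mem hBbnd hc hP⟩

end Assembly

end FanProcession

open FanProcession

theorem procession_nonextendable_even_general {k : ℕ} {ord : Fin k → ℕ}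
    {fat : Fin k → Bool} {α : Type*}
    (L : PVert k ord fat → Finset α) (hL : DangerousProc L)
    (cx cy cz : α)
    (h1 : IsPrecolProc k ord fat cx cy cz)
    (hne : ¬ ExtendsProc L cx cy cz) :
    ∀ i : Fin k, fat i = true → Even (ord i) := by
  classical
  intro i₀ hf₀
  by_contra hodd
  obtain ⟨hbnd, hpv, hapex⟩ := hL
  obtain ⟨hxy, hyz, -⟩ := h1
  have hA : ∀ m, 0 < m → m < k → ((L (bvert m)).erase cy : Set α).Nontrivial := by
    intro m hm hmk
    have := Finset.pred_card_le_card_erase (s := L (bvert m)) (a := cy)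
    rw [bvert_of_ne_zero ⟨m, hmk⟩ hm.ne', hbnd] at this
    rw [bvert_of_ne_zero ⟨m, hmk⟩ hm.ne']
    exact Finset.one_lt_card_iff_nontrivial.1 (by omega)
  obtain ⟨B, hB0, hBk, hB, hpiece⟩ := exists_boundary_seq (PieceColorable L cy) _ i₀ hA
    (fun i _ => PieceColorable.row (hpv i) (hapex i))
    (fun i _ => PieceColorable.col (hpv i) (hapex i))
    (pieceColorable_of_odd (hpv i₀) hf₀ (hapex i₀ hf₀) (Nat.not_even_iff_odd.1 hodd)) cx cz
  exact hne (extendsProc_of_pieceColorable hxy hyz hB0 hBk hB hpiece)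

/-- If some precoloring of the base of a fan procession with a dangerous list
assignment does not extend, then the procession is even: every constituent
fat fan has even order. -/
theorem procession_nonextendable_even {k : ℕ} {ord : Fin k → ℕ}
    {fat : Fin k → Bool} {α : Type*}
    (hk : 1 ≤ k) (hfat : ∀ i : Fin k, fat i = true → 1 ≤ ord i)
    (L : PVert k ord fat → Finset α) (hL : DangerousProc L)
    (cx cy cz : α)
    (h1 : IsPrecolProc k ord fat cx cy cz)
    (hne : ¬ ExtendsProc L cx cy cz) :
    ∀ i : Fin k, fat i = true → Even (ord i) :=
  procession_nonextendable_even_general L hL cx cy cz h1 hne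
end
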